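/- For any two density operators ρ, σ on a finite-dimensional Hilbert space, the trace distance and fidelity satisfy 1 − √F(ρ,σ) ≤ D_t(ρ,σ) ≤ √(1 − F(ρ,σ)), where D_t(ρ,σ) = (1/2)‖ρ−σ‖₁ and F(ρ,σ) = ‖√ρ√σ‖₁². -/

import Mathlib

open Matrix BigOperators Kronecker
open scoped Classical ComplexOrder

/-- The square root of a positive semidefinite matrix, as `Matrix.PosSemidef.sqrt` was defined
in Mathlib (December 2024); it has since been removed from Mathlib. -/
noncomputable def Matrix.PosSemidef.sqrt {n 𝕜 : Type*} [Fintype n] [RCLike 𝕜] [DecidableEq n]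
    {A : Matrix n n 𝕜} (hA : A.PosSemidef) : Matrix n n 𝕜 :=
  hA.1.eigenvectorUnitary.1 * diagonal ((↑) ∘ (√·) ∘ hA.1.eigenvalues) *
    (star hA.1.eigenvectorUnitary : Matrix n n 𝕜)

namespace QCap

/-- Trace norm: `‖A‖₁ = tr √(AᴴA)`. -/
noncomputable def traceNorm {ι : Type*} [Fintype ι] [DecidableEq ι] (A : Matrix ι ι ℂ) : ℝ :=
  ((Matrix.posSemidef_conjTranspose_mul_self A).sqrt.trace).re

/-- Trace distance `D_t(ρ,σ) = ‖ρ-σ‖₁ / 2`. -/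
noncomputable def traceDist {ι : Type*} [Fintype ι] [DecidableEq ι] (ρ σ : Matrix ι ι ℂ) : ℝ :=
  traceNorm (ρ - σ) / 2

/-- von Neumann entropy via eigenvalues, `H(ρ) = -∑ λᵢ log λᵢ`. -/
noncomputable def vnEntropy {ι : Type*} [Fintype ι] [DecidableEq ι] (ρ : Matrix ι ι ℂ) : ℝ :=
  if h : ρ.IsHermitian then ∑ i, Real.negMulLog (h.eigenvalues i) else 0

/-- A density operator: positive semidefinite with unit trace. -/
def IsDensity {ι : Type*} [Fintype ι] (ρ : Matrix ι ι ℂ) : Prop :=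
  ρ.PosSemidef ∧ ρ.trace = 1

/-- Kraus condition `∑ Kᵢᴴ Kᵢ = 1` (trace preservation for a CP map). -/
def IsKraus {ι κ α : Type*} [Fintype ι] [DecidableEq ι] [Fintype κ] [Fintype α]
    (K : κ → Matrix α ι ℂ) : Prop :=
  ∑ k, (K k)ᴴ * K k = 1

/-- Channel action `Φ(ρ) = ∑ Kᵢ ρ Kᵢᴴ`. -/
noncomputable def channelApply {ι κ α : Type*} [Fintype ι] [Fintype κ]
    (K : κ → Matrix α ι ℂ) (ρ : Matrix ι ι ℂ) : Matrix α α ℂ :=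
  ∑ k, K k * ρ * (K k)ᴴ

/-- Choi state `ω_Φ = (Φ ⊗ id)(|ω⟩⟨ω|)` with `|ω⟩ = (1/√d) ∑ᵢ |ii⟩`. -/
noncomputable def choiState {ι κ α : Type*} [Fintype ι] [DecidableEq ι] [Fintype κ]
    (K : κ → Matrix α ι ℂ) : Matrix (α × ι) (α × ι) ℂ :=
  (Fintype.card ι : ℂ)⁻¹ •
    ∑ i : ι, ∑ j : ι,
      (channelApply K (Matrix.single i j 1)) ⊗ₖ (Matrix.single i j 1)

/-- Partial trace over the first tensor factor. -/
noncomputable def ptraceFst {α β : Type*} [Fintype α]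
    (M : Matrix (α × β) (α × β) ℂ) : Matrix β β ℂ :=
  Matrix.of fun i j => ∑ a, M (a, i) (a, j)

/-- Partial trace over the second tensor factor. -/
noncomputable def ptraceSnd {α β : Type*} [Fintype β]
    (M : Matrix (α × β) (α × β) ℂ) : Matrix α α ℂ :=
  Matrix.of fun a b => ∑ i, M (a, i) (b, i)

/-- Fidelity `F(ρ,σ) = (tr √(√ρ σ √ρ))²`. -/
noncomputable def fidelity {ι : Type*} [Fintype ι] [DecidableEq ι] (ρ σ : Matrix ι ι ℂ) : ℝ :=
  if hρ : ρ.PosSemidef then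
    if h : (hρ.sqrt * σ * hρ.sqrt).PosSemidef then ((h.sqrt.trace).re) ^ 2 else 0
  else 0

/-- Coherent information of the channel at the maximally mixed input:
`I(Φ) = H(Φ(π_d)) - H(ω_Φ)`. -/
noncomputable def cohInfo {ι κ α : Type*} [Fintype ι] [DecidableEq ι] [Fintype κ]
    [Fintype α] [DecidableEq α] (K : κ → Matrix α ι ℂ) : ℝ :=
  vnEntropy (channelApply K ((Fintype.card ι : ℂ)⁻¹ • (1 : Matrix ι ι ℂ)))
    - vnEntropy (choiState K)

end QCap

/-!
Write `A = √ρ` and `B = √σ`, so that `√F(ρ, σ) = ‖BA‖₁` and `ρ - σ = A² - B²`.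

Lower bound: pairing `A² - B²` with the unitary `U = sign(A - B)` gives the Powers–Størmer
inequality `‖A - B‖₂² ≤ tr U(A² - B²) ≤ ‖A² - B²‖₁`, and `‖A - B‖₂² = 2 - 2 Re tr(BA)` with
`Re tr(BA) ≤ ‖BA‖₁`.

Upper bound: let `P` project onto the nonnegative part of `ρ - σ`, so that `D(ρ, σ) = p - q` with
`p = tr Pρ`, `q = tr Pσ`. Writing `‖BA‖₁ = Re tr(VᴴB(P + (1 - P))A)` for the polar partial
isometry `V` of `BA`, Cauchy–Schwarz on each half gives `√F ≤ √(pq) + √((1-p)(1-q))`, the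
fidelity of the two-outcome distributions `(p, 1-p)` and `(q, 1-q)`, for which
`p - q ≤ √(1 - F)` is elementary.
-/

open scoped MatrixOrder

lemma sq_sub_sq_le_sqrt_one_sub_sq {a b c d t : ℝ} (hac : a ^ 2 + c ^ 2 = 1)
    (hbd : b ^ 2 + d ^ 2 = 1) (ht : 0 ≤ t) (htab : t ≤ a * b + c * d) :
    a ^ 2 - b ^ 2 ≤ √(1 - t ^ 2) := by
  have hdiff : a ^ 2 - b ^ 2 = (a * d - b * c) * (a * d + b * c) := by
    linear_combination b ^ 2 * hac - a ^ 2 * hbd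
  have hsum : (a * d + b * c) ^ 2 ≤ 1 := by
    nlinarith [sq_nonneg (a * b - c * d)]
  have hlagrange : (a * b + c * d) ^ 2 + (a * d - b * c) ^ 2 = 1 := by
    linear_combination (a ^ 2 + c ^ 2) * hbd + hac
  have ht2 : t ^ 2 ≤ (a * b + c * d) ^ 2 := pow_le_pow_left₀ ht htab 2
  refine (le_abs_self _).trans (Real.abs_le_sqrt ?_)
  rw [hdiff, mul_pow]
  nlinarith [sq_nonneg (a * d - b * c)]

namespace Matrix.IsHermitian

variable {ι : Type*} [Fintype ι] [DecidableEq ι] {A : Matrix ι ι ℂ} (hA : A.IsHermitian)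

lemma cfc_congr {f g : ℝ → ℝ} (h : ∀ i, f (hA.eigenvalues i) = g (hA.eigenvalues i)) :
    hA.cfc f = hA.cfc g := by
  simp only [IsHermitian.cfc, Function.comp_def, h]

lemma cfc_mul (f g : ℝ → ℝ) : hA.cfc (f * g) = hA.cfc f * hA.cfc g := by
  simp only [IsHermitian.cfc, ← map_mul, diagonal_mul_diagonal]
  congr 2
  ext i
  simp

lemma cfc_add (f g : ℝ → ℝ) : hA.cfc (f + g) = hA.cfc f + hA.cfc g := by
  simp only [IsHermitian.cfc, ← map_add, diagonal_add]
  congr 2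
  ext i
  simp

lemma cfc_sub (f g : ℝ → ℝ) : hA.cfc (f - g) = hA.cfc f - hA.cfc g := by
  simp only [IsHermitian.cfc, ← map_sub, diagonal_sub]
  congr 2
  ext i
  simp

lemma cfc_zero : hA.cfc 0 = 0 := by
  simp [IsHermitian.cfc]

lemma cfc_one : hA.cfc 1 = 1 := by
  simp [IsHermitian.cfc]

lemma cfc_id : hA.cfc id = A :=
  (hA.cfc_eq id).symm.trans (_root_.cfc_id ℝ A)

lemma cfc_mul_self (f : ℝ → ℝ) : hA.cfc f * A = hA.cfc (f * id) := by
  rw [hA.cfc_mul, hA.cfc_id]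

lemma commute_cfc (f : ℝ → ℝ) : Commute A (hA.cfc f) := by
  simpa only [hA.cfc_eq, hA.cfc_id] using cfc_commute_cfc id f A

lemma isHermitian_cfc (f : ℝ → ℝ) : (hA.cfc f).IsHermitian :=
  hA.cfc_eq f ▸ cfc_predicate f A

lemma posSemidef_cfc {f : ℝ → ℝ} (hf : ∀ i, 0 ≤ f (hA.eigenvalues i)) : (hA.cfc f).PosSemidef := by
  rw [IsHermitian.cfc, Unitary.conjStarAlgAut_apply]
  exact (PosSemidef.diagonal fun i => by simpa using hf i).mul_mul_conjTranspose_same _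

lemma re_trace_cfc (f : ℝ → ℝ) : (hA.cfc f).trace.re = ∑ i, f (hA.eigenvalues i) := by
  rw [IsHermitian.cfc, Unitary.conjStarAlgAut_apply, trace_mul_cycle, Unitary.coe_star_mul_self,
    one_mul, trace_diagonal, Complex.re_sum]
  rfl

lemma abs_eq_cfc_abs : CFC.abs A = hA.cfc (|·|) := by
  rw [CFC.abs_eq_cfc_norm A hA, hA.cfc_eq]
  simp only [Real.norm_eq_abs]

end Matrix.IsHermitian

namespace Matrix

variable {ι : Type*} [Fintype ι] [DecidableEq ι]

lemma PosSemidef.cfcSqrt_eq_cfc {A : Matrix ι ι ℂ} (hA : A.PosSemidef) :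
    CFC.sqrt A = hA.1.cfc Real.sqrt := by
  rw [CFC.sqrt_eq_cfc, cfc_nnreal_eq_real _ A hA.nonneg, hA.1.cfc_eq]
  unfold Real.sqrt
  rfl

lemma PosSemidef.sqrt_eq_cfcSqrt {A : Matrix ι ι ℂ} (hA : A.PosSemidef) :
    hA.sqrt = CFC.sqrt A := by
  rw [hA.cfcSqrt_eq_cfc, IsHermitian.cfc, Unitary.conjStarAlgAut_apply]
  rfl

omit [DecidableEq ι] in
lemma PosSemidef.re_trace_nonneg {A : Matrix ι ι ℂ} (hA : A.PosSemidef) : 0 ≤ A.trace.re :=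
  (Complex.nonneg_iff.mp hA.trace_nonneg).1

lemma PosSemidef.re_trace_mul_nonneg {A B : Matrix ι ι ℂ} (hA : A.PosSemidef)
    (hB : B.PosSemidef) : 0 ≤ (A * B).trace.re := by
  have hS : (CFC.sqrt B)ᴴ = CFC.sqrt B := (CFC.sqrt_nonneg B).posSemidef.1
  have h : ((CFC.sqrt B)ᴴ * A * CFC.sqrt B).trace = (A * B).trace := by
    rw [hS, trace_mul_comm, ← mul_assoc, CFC.sqrt_mul_sqrt_self B hB.nonneg, trace_mul_comm]
  rw [← h]
  exact (hA.conjTranspose_mul_mul_same _).re_trace_nonneg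

lemma PosSemidef.re_trace_mul_le {S Q : Matrix ι ι ℂ} (hS : S.PosSemidef)
    (hQ : (1 - Q).PosSemidef) : (S * Q).trace.re ≤ S.trace.re := by
  have h := hS.re_trace_mul_nonneg hQ
  rw [mul_sub, mul_one, trace_sub, Complex.sub_re] at h
  linarith

lemma re_trace_conjTranspose_mul_le (G H : Matrix ι ι ℂ) :
    (Gᴴ * H).trace.re ≤ √(Gᴴ * G).trace.re * √(Hᴴ * H).trace.re := by
  let := toMatrixSeminormedAddCommGroup (1 : Matrix ι ι ℂ) PosSemidef.one
  let := toMatrixInnerProductSpace (1 : Matrix ι ι ℂ) PosSemidef.one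
  have h := re_inner_le_norm (𝕜 := ℂ) G H
  rw [norm_eq_sqrt_re_inner (𝕜 := ℂ) G, norm_eq_sqrt_re_inner (𝕜 := ℂ) H] at h
  change (H * 1 * Gᴴ).trace.re ≤ √(G * 1 * Gᴴ).trace.re * √(H * 1 * Hᴴ).trace.re at h
  simpa only [mul_one, trace_mul_comm H, trace_mul_comm G] using h

lemma mul_cfc_indicator_zero_eq_zero (M : Matrix ι ι ℂ) :
    M * (isHermitian_conjTranspose_mul_self M).cfc (fun x => if x = 0 then 1 else 0) = 0 := by
  have hN := isHermitian_conjTranspose_mul_self M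
  refine conjTranspose_mul_self_eq_zero.mp ?_
  rw [conjTranspose_mul, (hN.isHermitian_cfc _).eq, ← mul_assoc, mul_assoc _ Mᴴ, hN.cfc_mul_self,
    ← hN.cfc_mul, ← hN.cfc_zero]
  exact hN.cfc_congr fun i => by by_cases h : hN.eigenvalues i = 0 <;> simp [h]

theorem exists_contraction_mul_abs_eq (M : Matrix ι ι ℂ) :
    ∃ V : Matrix ι ι ℂ, V * CFC.abs M = M ∧ Vᴴ * M = CFC.abs M ∧ (1 - V * Vᴴ).PosSemidef := by
  have hN := isHermitian_conjTranspose_mul_self M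
  have hNM : hN.cfc id = Mᴴ * M := hN.cfc_id
  have hN_nonneg := (posSemidef_conjTranspose_mul_self M).eigenvalues_nonneg
  have habs : CFC.abs M = hN.cfc Real.sqrt := (posSemidef_conjTranspose_mul_self M).cfcSqrt_eq_cfc
  -- Since `0⁻¹ = 0`, `hN.cfc f` is the pseudo-inverse of `|M|`.
  let f : ℝ → ℝ := fun x => (√x)⁻¹
  have hF : (hN.cfc f)ᴴ = hN.cfc f := (hN.isHermitian_cfc f).eq
  have hff : ∀ i, hN.eigenvalues i ≠ 0 → (f * f * id : ℝ → ℝ) (hN.eigenvalues i) = 1 :=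
    fun i h => by
      simp only [f, Pi.mul_apply, id, ← mul_inv, Real.mul_self_sqrt (hN_nonneg i),
        inv_mul_cancel₀ h]
  refine ⟨M * hN.cfc f, ?_, ?_, ?_⟩
  · calc M * hN.cfc f * CFC.abs M = M * hN.cfc (1 - fun x => if x = 0 then 1 else 0) := by
          rw [habs, mul_assoc, ← hN.cfc_mul]
          congr 1
          refine hN.cfc_congr fun i => ?_
          by_cases h : hN.eigenvalues i = 0
          · simp [h]
          · simpa [h] using inv_mul_cancel₀ (Real.sqrt_ne_zero'.mpr ((hN_nonneg i).lt_of_ne' h))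
      _ = M := by
          rw [hN.cfc_sub, hN.cfc_one, mul_sub, mul_cfc_indicator_zero_eq_zero, mul_one, sub_zero]
  · calc (M * hN.cfc f)ᴴ * M = hN.cfc (f * id) := by
          rw [conjTranspose_mul, hF, mul_assoc, hN.cfc_mul, hNM]
      _ = CFC.abs M := by
          rw [habs]
          exact hN.cfc_congr fun i => by simp [f, inv_mul_eq_div, Real.div_sqrt]
  · have hproj : IsStarProjection (M * hN.cfc f * (M * hN.cfc f)ᴴ) := by
      refine ⟨?_, IsSelfAdjoint.mul_star_self _⟩
      calc M * hN.cfc f * (M * hN.cfc f)ᴴ * (M * hN.cfc f * (M * hN.cfc f)ᴴ)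
          = M * hN.cfc (f * f * id * (f * f)) * Mᴴ := by
            simp only [conjTranspose_mul, hF, hN.cfc_mul, hNM, mul_assoc]
        _ = M * hN.cfc (f * f) * Mᴴ := by
            congr 2
            refine hN.cfc_congr fun i => ?_
            by_cases h : hN.eigenvalues i = 0
            · simp [f, h]
            · rw [Pi.mul_apply, hff i h, one_mul]
        _ = M * hN.cfc f * (M * hN.cfc f)ᴴ := by
            simp only [conjTranspose_mul, hF, hN.cfc_mul, mul_assoc]
    exact hproj.one_sub.nonneg.posSemidef

end Matrix

namespace QCap

variable {ι : Type*} [Fintype ι] [DecidableEq ι]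

lemma traceNorm_eq_re_trace_abs (M : Matrix ι ι ℂ) :
    traceNorm M = (CFC.abs M).trace.re := by
  rw [traceNorm, PosSemidef.sqrt_eq_cfcSqrt]
  rfl

lemma traceNorm_nonneg (M : Matrix ι ι ℂ) : 0 ≤ traceNorm M := by
  rw [traceNorm_eq_re_trace_abs]
  exact (CFC.abs_nonneg M).posSemidef.re_trace_nonneg

lemma re_trace_le_traceNorm (M : Matrix ι ι ℂ) : M.trace.re ≤ traceNorm M := by
  obtain ⟨V, hVM, -, hV⟩ := exists_contraction_mul_abs_eq M
  have hS := (CFC.abs_nonneg M).posSemidef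
  set T := CFC.sqrt (CFC.abs M)
  have hT : Tᴴ = T := (CFC.sqrt_nonneg _).posSemidef.1
  have hTT : T * T = CFC.abs M := CFC.sqrt_mul_sqrt_self _ hS.nonneg
  have hcs := re_trace_conjTranspose_mul_le (Vᴴ * T) T
  have h1 : ((Vᴴ * T)ᴴ * T).trace = M.trace := by
    rw [conjTranspose_mul, conjTranspose_conjTranspose, hT, trace_mul_comm, ← mul_assoc, hTT,
      trace_mul_comm, hVM]
  have h2 : ((Vᴴ * T)ᴴ * (Vᴴ * T)).trace = (CFC.abs M * (V * Vᴴ)).trace := by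
    rw [conjTranspose_mul, conjTranspose_conjTranspose, hT,
      show T * V * (Vᴴ * T) = T * (V * Vᴴ) * T by noncomm_ring, trace_mul_comm, ← mul_assoc, hTT]
  rw [h1, h2, hT, hTT] at hcs
  calc M.trace.re ≤ √(CFC.abs M * (V * Vᴴ)).trace.re * √(CFC.abs M).trace.re := hcs
    _ ≤ √(CFC.abs M).trace.re * √(CFC.abs M).trace.re := by
        gcongr √?_ * _
        exact hS.re_trace_mul_le hV
    _ = traceNorm M := by rw [Real.mul_self_sqrt hS.re_trace_nonneg, traceNorm_eq_re_trace_abs]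

lemma traceNorm_mul_of_conjTranspose_mul_self_eq_one {U : Matrix ι ι ℂ} (hU : Uᴴ * U = 1)
    (M : Matrix ι ι ℂ) : traceNorm (U * M) = traceNorm M := by
  rw [traceNorm_eq_re_trace_abs, traceNorm_eq_re_trace_abs, CFC.abs, CFC.abs, star_mul,
    mul_assoc, ← mul_assoc (star U), star_eq_conjTranspose U, hU, one_mul]

lemma traceNorm_eq_sum_abs_eigenvalues {Y : Matrix ι ι ℂ} (hY : Y.IsHermitian) :
    traceNorm Y = ∑ i, |hY.eigenvalues i| := by
  rw [traceNorm_eq_re_trace_abs, hY.abs_eq_cfc_abs, hY.re_trace_cfc]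

lemma re_trace_sub_mul_sub_le_re_trace_abs_mul_add {A B : Matrix ι ι ℂ} (hA : A.PosSemidef)
    (hB : B.PosSemidef) :
    ((A - B) * (A - B)).trace.re ≤ (CFC.abs (A - B) * (A + B)).trace.re := by
  have hX : (A - B).IsHermitian := hA.1.sub hB.1
  have hpos : (hX.cfc (max · 0)).PosSemidef := hX.posSemidef_cfc fun _ => le_max_right _ _
  have hneg : (hX.cfc (fun x => max (-x) 0)).PosSemidef :=
    hX.posSemidef_cfc fun _ => le_max_right _ _
  have habs : CFC.abs (A - B) = hX.cfc (max · 0) + hX.cfc (fun x => max (-x) 0) := by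
    rw [hX.abs_eq_cfc_abs, ← hX.cfc_add]
    exact hX.cfc_congr fun i => (max_zero_add_max_neg_zero_eq_abs_self _).symm
  have hsub : A - B = hX.cfc (max · 0) - hX.cfc (fun x => max (-x) 0) := by
    rw [← hX.cfc_sub]
    refine (hX.cfc_id).symm.trans (hX.cfc_congr fun i => ?_)
    simp
  generalize hX.cfc (max · 0) = P at hpos habs hsub
  generalize hX.cfc (fun x => max (-x) 0) = N at hneg habs hsub
  have hsplit : CFC.abs (A - B) * (A + B)
      = (A - B) * (A - B) + (P * B + P * B) + (N * A + N * A) := by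
    rw [habs]
    nth_rewrite 1 [hsub]
    noncomm_ring
  have h1 := hpos.re_trace_mul_nonneg hB
  have h2 := hneg.re_trace_mul_nonneg hA
  rw [hsplit]
  simp only [trace_add, Complex.add_re]
  linarith

theorem re_trace_sub_mul_sub_le_traceNorm {A B : Matrix ι ι ℂ} (hA : A.PosSemidef)
    (hB : B.PosSemidef) : ((A - B) * (A - B)).trace.re ≤ traceNorm (A * A - B * B) := by
  have hX : (A - B).IsHermitian := hA.1.sub hB.1
  let sign : ℝ → ℝ := fun x => if 0 ≤ x then 1 else -1
  have hU : (hX.cfc sign)ᴴ * hX.cfc sign = 1 := by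
    rw [(hX.isHermitian_cfc sign).eq, ← hX.cfc_mul, ← hX.cfc_one]
    exact hX.cfc_congr fun i => by by_cases h : 0 ≤ hX.eigenvalues i <;> simp [sign, h]
  have hsign : hX.cfc sign * (A - B) = CFC.abs (A - B) := by
    rw [hX.cfc_mul_self, hX.abs_eq_cfc_abs]
    refine hX.cfc_congr fun i => ?_
    by_cases h : 0 ≤ hX.eigenvalues i
    · simp [sign, h, abs_of_nonneg h]
    · simp [sign, h, abs_of_neg (not_le.mp h)]
  have hcomm : (A - B) * hX.cfc sign = hX.cfc sign * (A - B) :=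
    (hX.commute_cfc sign).eq
  have htrace : (hX.cfc sign * (A * A - B * B)).trace = (CFC.abs (A - B) * (A + B)).trace := by
    have h2 : (2 : ℂ) * (hX.cfc sign * (A * A - B * B)).trace
        = (hX.cfc sign * ((A - B) * (A + B))).trace
          + (hX.cfc sign * ((A + B) * (A - B))).trace := by
      rw [two_mul, ← trace_add, ← trace_add, ← mul_add, ← mul_add]
      congr 2
      noncomm_ring
    rw [← mul_assoc, hsign, ← mul_assoc, trace_mul_cycle, hcomm, hsign, ← two_mul] at h2
    exact mul_left_cancel₀ two_ne_zero h2
  calc ((A - B) * (A - B)).trace.re ≤ (CFC.abs (A - B) * (A + B)).trace.re :=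
        re_trace_sub_mul_sub_le_re_trace_abs_mul_add hA hB
    _ = (hX.cfc sign * (A * A - B * B)).trace.re := by rw [htrace]
    _ ≤ traceNorm (hX.cfc sign * (A * A - B * B)) := re_trace_le_traceNorm _
    _ = traceNorm (A * A - B * B) := traceNorm_mul_of_conjTranspose_mul_self_eq_one hU _

lemma exists_isStarProjection_traceNorm_eq {Y : Matrix ι ι ℂ}
    (hY : Y.IsHermitian) (htr : Y.trace = 0) :
    ∃ P : Matrix ι ι ℂ, IsStarProjection P ∧ traceNorm Y = 2 * (P * Y).trace.re := by
  let step : ℝ → ℝ := fun x => if 0 ≤ x then 1 else 0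
  refine ⟨hY.cfc step, ⟨?_, hY.isHermitian_cfc step⟩, ?_⟩
  · change _ * _ = _
    rw [← hY.cfc_mul]
    exact hY.cfc_congr fun i => by by_cases h : 0 ≤ hY.eigenvalues i <;> simp [step, h]
  · have hsum : ∑ i, hY.eigenvalues i = 0 := by
      simpa [hY.cfc_id, htr] using (hY.re_trace_cfc id).symm
    have hstep : ∀ x, 2 * (step * id : ℝ → ℝ) x = |x| + x := fun x => by
      by_cases h : 0 ≤ x
      · simp [step, h, abs_of_nonneg h]; ring
      · simp [step, h, abs_of_neg (not_le.mp h)]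
    rw [hY.cfc_mul_self, hY.re_trace_cfc, traceNorm_eq_sum_abs_eigenvalues hY, Finset.mul_sum,
      Finset.sum_congr rfl fun i _ => hstep _, Finset.sum_add_distrib, hsum, add_zero]

lemma re_trace_mul_isStarProjection_le {A B E V : Matrix ι ι ℂ} (hA : A.IsHermitian)
    (hB : B.IsHermitian) (hE : IsStarProjection E) (hV : (1 - V * Vᴴ).PosSemidef) :
    (Vᴴ * (B * (E * A))).trace.re ≤ √(E * (A * A)).trace.re * √(E * (B * B)).trace.re := by
  have hEE : E * E = E := hE.isIdempotentElem
  have hEh : Eᴴ = E := hE.isSelfAdjoint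
  have hcs := re_trace_conjTranspose_mul_le (E * B * V) (E * A)
  have h1 : (E * B * V)ᴴ * (E * A) = Vᴴ * (B * (E * A)) := by
    simp only [conjTranspose_mul, hB.eq, hEh, mul_assoc, ← mul_assoc E E, hEE]
  have hBEB : (E * B)ᴴ * (E * B) = B * E * B := by
    rw [conjTranspose_mul, hB.eq, hEh, mul_assoc, ← mul_assoc E, hEE, mul_assoc]
  have h2 : ((E * B * V)ᴴ * (E * B * V)).trace = (B * E * B * (V * Vᴴ)).trace := by
    rw [conjTranspose_mul, mul_assoc, ← mul_assoc _ (E * B), hBEB, trace_mul_comm, mul_assoc]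
  have h3 : ((E * A)ᴴ * (E * A)).trace = (E * (A * A)).trace := by
    rw [conjTranspose_mul, hA.eq, hEh, mul_assoc, ← mul_assoc E, hEE, trace_mul_comm, mul_assoc]
  have hBEB_trace : (B * E * B).trace = (E * (B * B)).trace := by
    rw [trace_mul_comm, ← mul_assoc, trace_mul_comm]
  have hBEB_psd : (B * E * B).PosSemidef := hBEB ▸ posSemidef_conjTranspose_mul_self (E * B)
  rw [h1, h2, h3] at hcs
  calc (Vᴴ * (B * (E * A))).trace.re
      ≤ √(B * E * B * (V * Vᴴ)).trace.re * √(E * (A * A)).trace.re := hcs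
    _ ≤ √(B * E * B).trace.re * √(E * (A * A)).trace.re := by
        gcongr √?_ * _
        exact hBEB_psd.re_trace_mul_le hV
    _ = √(E * (A * A)).trace.re * √(E * (B * B)).trace.re := by
        rw [mul_comm, hBEB_trace]

theorem one_sub_traceNorm_mul_le {A B : Matrix ι ι ℂ} (hA : A.PosSemidef) (hB : B.PosSemidef)
    (htrA : (A * A).trace = 1) (htrB : (B * B).trace = 1) :
    1 - traceNorm (B * A) ≤ traceNorm (A * A - B * B) / 2 := by
  have hexpand : ((A - B) * (A - B)).trace.re = 2 - 2 * (B * A).trace.re := by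
    rw [show (A - B) * (A - B) = A * A + B * B - (A * B + B * A) by noncomm_ring, trace_sub,
      trace_add, trace_add, htrA, htrB, trace_mul_comm A B]
    simp only [Complex.sub_re, Complex.add_re, Complex.one_re]
    ring
  linarith [re_trace_sub_mul_sub_le_traceNorm hA hB, re_trace_le_traceNorm (B * A)]

theorem traceNorm_sq_sub_sq_le {A B : Matrix ι ι ℂ} (hA : A.PosSemidef) (hB : B.PosSemidef)
    (htrA : (A * A).trace = 1) (htrB : (B * B).trace = 1) :
    traceNorm (A * A - B * B) / 2 ≤ √(1 - traceNorm (B * A) ^ 2) := by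
  have hAA : (A * A).PosSemidef := by simpa only [hA.1.eq] using posSemidef_conjTranspose_mul_self A
  have hBB : (B * B).PosSemidef := by simpa only [hB.1.eq] using posSemidef_conjTranspose_mul_self B
  obtain ⟨P, hP, hPY⟩ := exists_isStarProjection_traceNorm_eq (hAA.1.sub hBB.1)
    (by rw [trace_sub, htrA, htrB, sub_self])
  obtain ⟨V, -, hVM, hV⟩ := exists_contraction_mul_abs_eq (B * A)
  have hcompl : ∀ {C : Matrix ι ι ℂ}, C.trace = 1 →
      ((1 - P) * C).trace.re = 1 - (P * C).trace.re := fun hC => by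
    rw [sub_mul, one_mul, trace_sub, hC, Complex.sub_re, Complex.one_re]
  set p := (P * (A * A)).trace.re
  set q := (P * (B * B)).trace.re
  have hp : 0 ≤ p := hP.nonneg.posSemidef.re_trace_mul_nonneg hAA
  have hq : 0 ≤ q := hP.nonneg.posSemidef.re_trace_mul_nonneg hBB
  have hp' : 0 ≤ 1 - p := hcompl htrA ▸ hP.one_sub.nonneg.posSemidef.re_trace_mul_nonneg hAA
  have hq' : 0 ≤ 1 - q := hcompl htrB ▸ hP.one_sub.nonneg.posSemidef.re_trace_mul_nonneg hBB
  have hfid : traceNorm (B * A) ≤ √p * √q + √(1 - p) * √(1 - q) := by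
    calc traceNorm (B * A) = (Vᴴ * (B * A)).trace.re := by rw [hVM, traceNorm_eq_re_trace_abs]
      _ = (Vᴴ * (B * (P * A))).trace.re + (Vᴴ * (B * ((1 - P) * A))).trace.re := by
        rw [← Complex.add_re, ← trace_add, ← mul_add, ← mul_add, ← add_mul, add_sub_cancel,
          one_mul]
      _ ≤ √p * √q + √(1 - p) * √(1 - q) := by
        refine add_le_add (re_trace_mul_isStarProjection_le hA.1 hB.1 hP hV) ?_
        rw [← hcompl htrA, ← hcompl htrB]
        exact re_trace_mul_isStarProjection_le hA.1 hB.1 hP.one_sub hV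
  have hD : traceNorm (A * A - B * B) / 2 = p - q := by
    rw [hPY, mul_sub, trace_sub, Complex.sub_re]
    ring
  rw [hD, ← Real.sq_sqrt hp, ← Real.sq_sqrt hq]
  exact sq_sub_sq_le_sqrt_one_sub_sq (by rw [Real.sq_sqrt hp, Real.sq_sqrt hp']; ring)
    (by rw [Real.sq_sqrt hq, Real.sq_sqrt hq']; ring) (traceNorm_nonneg _) hfid

lemma fidelity_eq_traceNorm_sq {ρ σ : Matrix ι ι ℂ} (hρ : ρ.PosSemidef) (hσ : σ.PosSemidef) :
    fidelity ρ σ = traceNorm (CFC.sqrt σ * CFC.sqrt ρ) ^ 2 := by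
  have hS : (CFC.sqrt ρ)ᴴ = CFC.sqrt ρ := (CFC.sqrt_nonneg ρ).posSemidef.1
  have he : hρ.sqrt * σ * hρ.sqrt = (CFC.sqrt σ * CFC.sqrt ρ)ᴴ * (CFC.sqrt σ * CFC.sqrt ρ) := by
    calc hρ.sqrt * σ * hρ.sqrt = CFC.sqrt ρ * (CFC.sqrt σ * CFC.sqrt σ) * CFC.sqrt ρ := by
          rw [hρ.sqrt_eq_cfcSqrt, CFC.sqrt_mul_sqrt_self σ hσ.nonneg]
      _ = (CFC.sqrt σ * CFC.sqrt ρ)ᴴ * (CFC.sqrt σ * CFC.sqrt ρ) := by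
          rw [conjTranspose_mul, hS, (CFC.sqrt_nonneg σ).posSemidef.1.eq]
          simp only [mul_assoc]
  have h : (hρ.sqrt * σ * hρ.sqrt).PosSemidef := he ▸ posSemidef_conjTranspose_mul_self _
  rw [fidelity, dif_pos hρ, dif_pos h, h.sqrt_eq_cfcSqrt, he, traceNorm_eq_re_trace_abs]
  rfl

end QCap

open QCap Matrix in
/-- Fuchs–van de Graaf inequalities. -/
theorem fuchs_van_de_graaf {ι : Type*} [Fintype ι] [DecidableEq ι]
    (ρ σ : Matrix ι ι ℂ) (hρ : IsDensity ρ) (hσ : IsDensity σ) :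
    1 - Real.sqrt (fidelity ρ σ) ≤ traceDist ρ σ ∧
      traceDist ρ σ ≤ Real.sqrt (1 - fidelity ρ σ) := by
  obtain ⟨hρ, hρ1⟩ := hρ
  obtain ⟨hσ, hσ1⟩ := hσ
  have hA := CFC.sqrt_mul_sqrt_self ρ hρ.nonneg
  have hB := CFC.sqrt_mul_sqrt_self σ hσ.nonneg
  have htrA : (CFC.sqrt ρ * CFC.sqrt ρ).trace = 1 := by rw [hA, hρ1]
  have htrB : (CFC.sqrt σ * CFC.sqrt σ).trace = 1 := by rw [hB, hσ1]
  have hD : traceDist ρ σ = traceNorm (CFC.sqrt ρ * CFC.sqrt ρ - CFC.sqrt σ * CFC.sqrt σ) / 2 := by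
    rw [traceDist, hA, hB]
  rw [fidelity_eq_traceNorm_sq hρ hσ, Real.sqrt_sq (traceNorm_nonneg _), hD]
  have hsqrtρ := (CFC.sqrt_nonneg ρ).posSemidef
  have hsqrtσ := (CFC.sqrt_nonneg σ).posSemidef
  exact ⟨one_sub_traceNorm_mul_le hsqrtρ hsqrtσ htrA htrB,
    traceNorm_sq_sub_sq_le hsqrtρ hsqrtσ htrA htrB⟩
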